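/- Let G and H be finite simple graphs with a(G) ≤ 1/2 or a(H) ≤ 1/2, where a(K) = max{|U|/(|U| + |N_K(U)|) : U a nonempty independent set of K}. Then a(G × H) ≤ max{a(G), a(H)}. -/

import Mathlib

open scoped Classical
open Filter

/-- Categorical (tensor) product of two simple graphs. -/
def tensorProd {α β : Type*} (G : SimpleGraph α) (H : SimpleGraph β) :
    SimpleGraph (α × β) where
  Adj p q := G.Adj p.1 q.1 ∧ H.Adj p.2 q.2
  symm := ⟨fun p q h => ⟨h.1.symm, h.2.symm⟩⟩
  loopless := ⟨fun p h => G.irrefl h.1⟩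

/-- A finset is independent. -/
def IsIndep {α : Type*} (G : SimpleGraph α) (U : Finset α) : Prop :=
  ∀ u ∈ U, ∀ v ∈ U, ¬ G.Adj u v

/-- Neighborhood of a finset. -/
noncomputable def nbhd {α : Type*} [Fintype α] (G : SimpleGraph α) (U : Finset α) : Finset α :=
  Finset.univ.filter (fun v => ∃ u ∈ U, G.Adj u v)

/-- Independence number. -/
noncomputable def alphaNum {α : Type*} [Fintype α] (G : SimpleGraph α) : ℕ :=
  sSup {n : ℕ | ∃ U : Finset α, IsIndep G U ∧ U.card = n}

/-- Independence ratio. -/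
noncomputable def iRatio {α : Type*} [Fintype α] (G : SimpleGraph α) : ℝ :=
  (alphaNum G : ℝ) / (Fintype.card α : ℝ)

/-- a(G): the maximum of |U|/(|U|+|N(U)|) over nonempty independent sets. -/
noncomputable def aRatio {α : Type*} [Fintype α] (G : SimpleGraph α) : ℝ :=
  sSup {r : ℝ | ∃ U : Finset α, U.Nonempty ∧ IsIndep G U ∧
    r = (U.card : ℝ) / ((U.card : ℝ) + ((nbhd G U).card : ℝ))}

/-- b(G): the minimum of |N(U)|/|U| over nonempty independent sets. -/
noncomputable def bRatio {α : Type*} [Fintype α] (G : SimpleGraph α) : ℝ :=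
  sInf {r : ℝ | ∃ U : Finset α, U.Nonempty ∧ IsIndep G U ∧
    r = ((nbhd G U).card : ℝ) / (U.card : ℝ)}

/-- a*(G). -/
noncomputable def aStar {α : Type*} [Fintype α] (G : SimpleGraph α) : ℝ :=
  if aRatio G ≤ 1/2 then aRatio G else 1

/-- k-th categorical power of G. -/
def tensorPow {α : Type*} (G : SimpleGraph α) (k : ℕ) : SimpleGraph (Fin k → α) where
  Adj x y := x ≠ y ∧ ∀ i, G.Adj (x i) (y i)
  symm := ⟨fun x y h => ⟨h.1.symm, fun i => (h.2 i).symm⟩⟩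
  loopless := ⟨fun x h => h.1 rfl⟩

/-- Disjoint union of two simple graphs. -/
def disjUnion {α β : Type*} (G : SimpleGraph α) (H : SimpleGraph β) :
    SimpleGraph (α ⊕ β) where
  Adj p q := match p, q with
    | Sum.inl a, Sum.inl b => G.Adj a b
    | Sum.inr a, Sum.inr b => H.Adj a b
    | _, _ => False
  symm := ⟨by rintro (a|a) (b|b) h <;> simp_all <;> exact h.symm⟩
  loopless := ⟨by rintro (a|a) h <;> simp_all⟩

/-!
Put `t = max (a G) (a H)`. Clearing denominators, `a K ≤ t` says `(1 - t) |W| ≤ t |N(W)|` for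
every independent `W`. Applied to the independent set `S \ N(S)`, whose neighbourhood avoids `S`,
it gives `(1 - t) |S \ N(S)| + t |S ∩ N(S)| ≤ t |N(S)|` for every `S`.

Let `U ⊆ G × H` be independent with rows `Uₓ`. Apply this bound in `H` to every row, and in `G`
to every `Q_z = {x | z ∈ N_H(Uₓ)}`, whose `G`-neighbourhood is the column of `N(U)` over `z`.
The `x` with `z ∈ Uₓ ∩ N_H(Uₓ)` lie in `Q_z \ N_G(Q_z)` because `U` is independent, and when
`a G ≤ 1/2` they may be counted with weight `1 - 2t` in the column bound. Double counting then
adds the row and column bounds up to `(1 - t) |U| ≤ t |N(U)|`. The case `a H ≤ 1/2` follows by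
the symmetry `G × H ≃ H × G`.
-/

open Finset

section Neighbourhood

variable {α : Type*} [Fintype α] {G : SimpleGraph α}

lemma mem_nbhd {U : Finset α} {v : α} : v ∈ nbhd G U ↔ ∃ u ∈ U, G.Adj u v := by
  simp [nbhd]

lemma nbhd_mono {U V : Finset α} (h : U ⊆ V) : nbhd G U ⊆ nbhd G V := fun _ hv ↦
  have ⟨u, hu, huv⟩ := mem_nbhd.1 hv
  mem_nbhd.2 ⟨u, h hu, huv⟩

lemma isIndep_sdiff_nbhd (S : Finset α) : IsIndep G (S \ nbhd G S) :=
  fun u hu _ hv huv ↦ (mem_sdiff.1 hv).2 (mem_nbhd.2 ⟨u, (mem_sdiff.1 hu).1, huv⟩)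

lemma disjoint_nbhd_sdiff_nbhd (S : Finset α) : Disjoint (nbhd G (S \ nbhd G S)) S :=
  disjoint_left.2 fun v hv hvS ↦
    have ⟨_, hu, huv⟩ := mem_nbhd.1 hv
    (mem_sdiff.1 hu).2 (mem_nbhd.2 ⟨v, hvS, huv.symm⟩)

end Neighbourhood

section Ratio

variable {α : Type*} [Fintype α] {G : SimpleGraph α}

lemma aRatio_nonneg (G : SimpleGraph α) : 0 ≤ aRatio G :=
  Real.sSup_nonneg <| by rintro _ ⟨U, -, -, rfl⟩; positivity

lemma bddAbove_aRatio_set (G : SimpleGraph α) :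
    BddAbove {r : ℝ | ∃ U : Finset α, U.Nonempty ∧ IsIndep G U ∧
      r = (#U : ℝ) / (#U + #(nbhd G U))} := by
  refine ⟨1, ?_⟩
  rintro _ ⟨U, -, -, rfl⟩
  exact div_le_one_of_le₀ (by simp) (by positivity)

lemma aRatio_le_iff {t : ℝ} (ht : 0 ≤ t) :
    aRatio G ≤ t ↔ ∀ U, IsIndep G U → (1 - t) * #U ≤ t * #(nbhd G U) := by
  constructor
  · intro hG U hU
    obtain rfl | hne := U.eq_empty_or_nonempty
    · simp [nbhd]
    have hpos : (0 : ℝ) < #U + #(nbhd G U) := by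
      have : (0 : ℝ) < #U := by exact_mod_cast hne.card_pos
      positivity
    have := (le_csSup (bddAbove_aRatio_set G) ⟨U, hne, hU, rfl⟩).trans hG
    rw [div_le_iff₀ hpos] at this
    linarith
  · intro hG
    refine Real.sSup_le ?_ ht
    rintro _ ⟨U, hne, hU, rfl⟩
    have hpos : (0 : ℝ) < #U + #(nbhd G U) := by
      have : (0 : ℝ) < #U := by exact_mod_cast hne.card_pos
      positivity
    rw [div_le_iff₀ hpos]
    linarith [hG U hU]

end Ratio

section Expansion

variable {α : Type*} [Fintype α] {G : SimpleGraph α} {t : ℝ}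

lemma le_card_nbhd_of_aRatio_le (ht : 0 ≤ t) (hG : aRatio G ≤ t) (S : Finset α) :
    (1 - t) * #(S \ nbhd G S) + t * #(S ∩ nbhd G S) ≤ t * #(nbhd G S) := by
  have hW := (aRatio_le_iff ht).1 hG _ (isIndep_sdiff_nbhd S)
  have hcard : #(nbhd G (S \ nbhd G S)) + #(S ∩ nbhd G S) ≤ #(nbhd G S) := by
    rw [← card_union_of_disjoint ((disjoint_nbhd_sdiff_nbhd S).mono_right inter_subset_left)]
    exact card_le_card (union_subset (nbhd_mono sdiff_subset) inter_subset_right)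
  have hcard' : (#(nbhd G (S \ nbhd G S)) : ℝ) + #(S ∩ nbhd G S) ≤ #(nbhd G S) := by
    exact_mod_cast hcard
  linarith [mul_le_mul_of_nonneg_left hcard' ht]

lemma le_card_nbhd_of_aRatio_le_half (ht : 0 ≤ t) (hG : aRatio G ≤ t) (hG' : aRatio G ≤ 1 / 2)
    {S C : Finset α} (hC : C ⊆ S \ nbhd G S) :
    t * #S + (1 - 2 * t) * #C ≤ t * #(nbhd G S) := by
  have hsplit : (#(S \ nbhd G S) : ℝ) + #(S ∩ nbhd G S) = #S := by
    exact_mod_cast card_sdiff_add_card_inter S (nbhd G S)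
  have hCW : (#C : ℝ) ≤ #(S \ nbhd G S) := by exact_mod_cast card_le_card hC
  rcases le_total t (1 / 2) with hthalf | hthalf
  · have hS := le_card_nbhd_of_aRatio_le ht hG S
    have hCW' := mul_le_mul_of_nonneg_left hCW (by linarith : (0 : ℝ) ≤ 1 - 2 * t)
    rw [← hsplit]
    linarith
  · have hS := le_card_nbhd_of_aRatio_le (by norm_num) hG' S
    have hSN : (#S : ℝ) ≤ #(nbhd G S) := by linarith
    have hC := mul_nonpos_of_nonpos_of_nonneg (by linarith : 1 - 2 * t ≤ 0) (#C).cast_nonneg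
    linarith [mul_le_mul_of_nonneg_left hSN ht]

end Expansion

section Counting

variable {α β : Type*} [Fintype β]

noncomputable def row (U : Finset (α × β)) (x : α) : Finset β := {y | (x, y) ∈ U}

@[simp]
lemma mem_row {U : Finset (α × β)} {x : α} {y : β} : y ∈ row U x ↔ (x, y) ∈ U := by
  simp [row]

variable [Fintype α]

lemma card_eq_sum_card_row (U : Finset (α × β)) : #U = ∑ x, #(row U x) := by
  simp only [row, card_filter, ← Fintype.sum_prod_type']
  simp

lemma card_eq_sum_card_col (U : Finset (α × β)) : #U = ∑ y, #{x | (x, y) ∈ U} := by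
  simp only [card_filter]
  rw [Finset.sum_comm, ← Fintype.sum_prod_type']
  simp

lemma sum_card_eq_sum_card_filter_mem (f : α → Finset β) :
    ∑ x, #(f x) = ∑ y, #{x | y ∈ f x} := by
  simpa [bipartiteAbove, bipartiteBelow] using
    sum_card_bipartiteAbove_eq_sum_card_bipartiteBelow (s := univ) (t := univ)
      (fun x y ↦ y ∈ f x)

end Counting

section TensorProd

variable {α β : Type*} [Fintype α] [Fintype β] {G : SimpleGraph α} {H : SimpleGraph β}

lemma filter_mem_nbhd_tensorProd (U : Finset (α × β)) (z : β) :
    ({x | (x, z) ∈ nbhd (tensorProd G H) U} : Finset α) =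
      nbhd G {x | z ∈ nbhd H (row U x)} := by
  ext x'
  simp only [mem_filter, mem_univ, true_and, mem_nbhd, mem_row]
  constructor
  · rintro ⟨⟨x, y⟩, hxy, hGx, hHy⟩
    exact ⟨x, ⟨y, hxy, hHy⟩, hGx⟩
  · rintro ⟨x, ⟨y, hxy, hHy⟩, hGx⟩
    exact ⟨(x, y), hxy, hGx, hHy⟩

lemma filter_mem_row_inter_subset_sdiff_nbhd {U : Finset (α × β)}
    (hU : IsIndep (tensorProd G H) U) (z : β) :
    ({x | z ∈ row U x ∩ nbhd H (row U x)} : Finset α) ⊆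
      ({x | z ∈ nbhd H (row U x)} : Finset α) \ nbhd G {x | z ∈ nbhd H (row U x)} := by
  intro x hx
  simp only [mem_filter, mem_univ, true_and, mem_inter, mem_row] at hx
  refine mem_sdiff.2 ⟨by simpa using hx.2, fun hxN ↦ ?_⟩
  obtain ⟨x', hx', hGx⟩ := mem_nbhd.1 hxN
  simp only [mem_filter, mem_univ, true_and] at hx'
  obtain ⟨y, hy, hHy⟩ := mem_nbhd.1 hx'
  exact hU _ (mem_row.1 hy) _ hx.1 ⟨hGx, hHy⟩

end TensorProd

section Main

variable {α β : Type*} [Fintype α] [Fintype β] {G : SimpleGraph α} {H : SimpleGraph β}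

lemma aRatio_tensorProd_le_of_aRatio_left_le_half (hG : aRatio G ≤ 1 / 2) :
    aRatio (tensorProd G H) ≤ max (aRatio G) (aRatio H) := by
  set t := max (aRatio G) (aRatio H)
  have ht : 0 ≤ t := (aRatio_nonneg G).trans (le_max_left _ _)
  refine (aRatio_le_iff ht).2 fun U hU ↦ ?_
  set R := row U
  set B := fun x ↦ nbhd H (R x)
  set Q : β → Finset α := fun z ↦ {x | z ∈ B x}
  set C : β → Finset α := fun z ↦ {x | z ∈ R x ∩ B x}
  have hrow x : (1 - t) * #(R x \ B x) + t * #(R x ∩ B x) ≤ t * #(B x) :=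
    le_card_nbhd_of_aRatio_le ht (le_max_right _ _) (R x)
  have hcol z : t * #(Q z) + (1 - 2 * t) * #(C z) ≤ t * #(nbhd G (Q z)) :=
    le_card_nbhd_of_aRatio_le_half ht (le_max_left _ _) hG
      (filter_mem_row_inter_subset_sdiff_nbhd hU z)
  have hUcard : (#U : ℝ) = ∑ x, ((#(R x \ B x) : ℝ) + #(R x ∩ B x)) := by
    have hsplit x : (#(R x \ B x) : ℝ) + #(R x ∩ B x) = #(R x) := by
      exact_mod_cast card_sdiff_add_card_inter _ _
    rw [card_eq_sum_card_row, Nat.cast_sum]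
    exact sum_congr rfl fun x _ ↦ (hsplit x).symm
  have hB : ∑ x, (#(B x) : ℝ) = ∑ z, (#(Q z) : ℝ) := by
    exact_mod_cast sum_card_eq_sum_card_filter_mem B
  have hRB : ∑ x, (#(R x ∩ B x) : ℝ) = ∑ z, (#(C z) : ℝ) := by
    exact_mod_cast sum_card_eq_sum_card_filter_mem fun x ↦ R x ∩ B x
  have hN : (#(nbhd (tensorProd G H) U) : ℝ) = ∑ z, (#(nbhd G (Q z)) : ℝ) := by
    rw [card_eq_sum_card_col, Nat.cast_sum]
    exact sum_congr rfl fun z _ ↦ by rw [filter_mem_nbhd_tensorProd]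
  calc (1 - t) * #U
      = ∑ x, ((1 - t) * #(R x \ B x) + t * #(R x ∩ B x)) +
          (1 - 2 * t) * ∑ x, (#(R x ∩ B x) : ℝ) := by
        rw [hUcard, mul_sum, mul_sum, ← sum_add_distrib]
        exact sum_congr rfl fun x _ ↦ by ring
    _ ≤ ∑ x, t * #(B x) + (1 - 2 * t) * ∑ x, (#(R x ∩ B x) : ℝ) := by
        gcongr with x
        exact hrow x
    _ = ∑ z, (t * #(Q z) + (1 - 2 * t) * #(C z)) := by
        rw [← mul_sum, hB, hRB, sum_add_distrib, mul_sum, mul_sum]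
    _ ≤ ∑ z, t * #(nbhd G (Q z)) := sum_le_sum fun z _ ↦ hcol z
    _ = t * #(nbhd (tensorProd G H) U) := by rw [hN, mul_sum]

end Main

section Iso

variable {α β : Type*} {G : SimpleGraph α} {G' : SimpleGraph β}

lemma IsIndep.map (e : G ≃g G') {U : Finset α} (hU : IsIndep G U) :
    IsIndep G' (U.map e.toEquiv.toEmbedding) := by
  simp only [IsIndep, Finset.mem_map, forall_exists_index, and_imp]
  rintro _ u hu rfl _ v hv rfl
  exact fun huv ↦ hU u hu v hv (e.map_adj_iff.1 huv)

variable [Fintype α] [Fintype β]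

lemma nbhd_map (e : G ≃g G') (U : Finset α) :
    nbhd G' (U.map e.toEquiv.toEmbedding) = (nbhd G U).map e.toEquiv.toEmbedding := by
  ext w
  obtain ⟨v, rfl⟩ := e.surjective w
  simp only [mem_nbhd, Finset.mem_map, e.surjective.exists, Equiv.coe_toEmbedding,
    RelIso.coe_fn_toEquiv, e.map_adj_iff, e.injective.eq_iff, exists_eq_right]

lemma aRatio_le_of_iso (e : G ≃g G') : aRatio G ≤ aRatio G' := by
  refine (aRatio_le_iff (aRatio_nonneg G')).2 fun U hU ↦ ?_
  have := (aRatio_le_iff (aRatio_nonneg G')).1 le_rfl _ (hU.map e)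
  rwa [nbhd_map, card_map, card_map] at this

end Iso

def tensorProdComm {α β : Type*} (G : SimpleGraph α) (H : SimpleGraph β) :
    tensorProd G H ≃g tensorProd H G where
  toEquiv := Equiv.prodComm α β
  map_rel_iff' := and_comm

theorem stmt3_general {α β : Type*} [Fintype α] [Fintype β]
    (G : SimpleGraph α) (H : SimpleGraph β)
    (h : aRatio G ≤ 1/2 ∨ aRatio H ≤ 1/2) :
    aRatio (tensorProd G H) ≤ max (aRatio G) (aRatio H) := by
  rcases h with hG | hH
  · exact aRatio_tensorProd_le_of_aRatio_left_le_half hG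
  · rw [max_comm]
    exact (aRatio_le_of_iso (tensorProdComm G H)).trans
      (aRatio_tensorProd_le_of_aRatio_left_le_half hH)

theorem stmt3 {α β : Type*} [Fintype α] [Fintype β] [Nonempty α] [Nonempty β]
    (G : SimpleGraph α) (H : SimpleGraph β)
    (h : aRatio G ≤ 1/2 ∨ aRatio H ≤ 1/2) :
    aRatio (tensorProd G H) ≤ max (aRatio G) (aRatio H) :=
  stmt3_general G H h
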